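/- arXiv:2404.14615 — 3 statements merged into one kernel-verified Lean document; each statement's English description precedes it below -/
import Mathlib

section
/- Let Γ₁ be a group, Γ₂ ⊆ Γ₁ a subgroup of finite index, V an abelian group with a Γ₂-action, and φ ∈ Z¹(Γ₂, V). For h ∈ Γ₂ let f_φ(h) ∈ Ind_{Γ₂}^{Γ₁} V be the function supported on Γ₂ with f_φ(h)(k) = k·φ(h) for k ∈ Γ₂ and f_φ(h)(g) = 0 for g ∉ Γ₂. Define Φ_φ : Γ₁ → Ind_{Γ₂}^{Γ₁} V by Φ_φ(g) = Σ_c σ(c)^{-1}·f_φ(σ(c)·g·σ(cg)^{-1}), the sum running over all right cosets c of Γ₂ in Γ₁. Then Φ_φ is a 1-cocycle in Z¹(Γ₁, Ind_{Γ₂}^{Γ₁} V) and satisfies Φ_φ(k)(1) = φ(k) for all k ∈ Γ₂. -/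
/-!
STATEMENT 1.  The explicit section of Shapiro's lemma: given a 1-cocycle
φ ∈ Z¹(Γ₂, V) and a choice σ of right-coset representatives (with σ(Γ₂)=1),
the function Φ_φ(g) = ∑_c σ(c)⁻¹ • f_φ(σ(c) g σ(cg)⁻¹) is a 1-cocycle in
Z¹(Γ₁, Ind_{Γ₂}^{Γ₁} V) with Φ_φ(k)(1) = φ(k) for k ∈ Γ₂.
-/

section Statement1

variable {Γ₁ : Type} [Group Γ₁] (Γ₂ : Subgroup Γ₁)
variable (V : Type) [AddCommGroup V] [DistribMulAction ↥Γ₂ V]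

/-- The space of right cosets `Γ₂\Γ₁`. -/
abbrev RCoset := Quotient (QuotientGroup.rightRel Γ₂)

/-- The right coset of an element. -/
def rcoset (x : Γ₁) : RCoset Γ₂ := Quotient.mk (QuotientGroup.rightRel Γ₂) x

/-- Right multiplication of a right coset by a group element: `c ↦ cg`. -/
def cosetMul (c : RCoset Γ₂) (g : Γ₁) : RCoset Γ₂ :=
  Quotient.lift (fun x => rcoset Γ₂ (x * g))
    (by
      intro a b hab
      have hab' : b * a⁻¹ ∈ Γ₂ := QuotientGroup.rightRel_apply.mp hab
      apply Quotient.sound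
      refine QuotientGroup.rightRel_apply.mpr ?_
      simpa [mul_assoc] using hab') c

/-- `Ind_{Γ₂}^{Γ₁} V`: functions `f : Γ₁ → V` with `f(kg) = k • f(g)` for
`k ∈ Γ₂`; an additive subgroup of `Γ₁ → V`, on which `Γ₁` acts by right
translation `(g • f)(x) = f(xg)`. -/
def IndSub : AddSubgroup (Γ₁ → V) where
  carrier := {f | ∀ (k : ↥Γ₂) (g : Γ₁), f ((k : Γ₁) * g) = k • f g}
  zero_mem' := by intro k g; simp
  add_mem' := by
    intro f f' hf hf' k g
    simp only [Pi.add_apply, hf k g, hf' k g, smul_add]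
  neg_mem' := by
    intro f hf k g
    simp only [Pi.neg_apply, hf k g, smul_neg]

/-- The element `σ(c) g σ(cg)⁻¹` of `Γ₂`, for a section σ of the right coset
space. -/
def cosetCocycle (σ : RCoset Γ₂ → Γ₁) (hσ : ∀ c, rcoset Γ₂ (σ c) = c)
    (g : Γ₁) (c : RCoset Γ₂) : ↥Γ₂ :=
  ⟨σ c * g * (σ (cosetMul Γ₂ c g))⁻¹, by
    have h1 : rcoset Γ₂ (σ c * g) = cosetMul Γ₂ c g := by
      have := hσ c
      conv_rhs => rw [← this]
      rfl
    have h2 : rcoset Γ₂ (σ (cosetMul Γ₂ c g)) = rcoset Γ₂ (σ c * g) := by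
      rw [hσ, h1]
    have h3 : σ c * g * (σ (cosetMul Γ₂ c g))⁻¹ ∈ Γ₂ :=
      QuotientGroup.rightRel_apply.mp (Quotient.exact h2)
    exact h3⟩

open scoped Classical in
/-- `f_φ(v)`: the function supported on `Γ₂` with value `k • v` at `k ∈ Γ₂`. -/
noncomputable def suppFun (v : V) : Γ₁ → V :=
  fun x => if hx : x ∈ Γ₂ then (⟨x, hx⟩ : ↥Γ₂) • v else 0

/-- The explicit Shapiro cocycle
`Φ_φ(g) = ∑_c σ(c)⁻¹ • f_φ(σ(c) g σ(cg)⁻¹)`, written out pointwise (using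
`(γ • f)(x) = f(xγ)`). -/
noncomputable def shapiroCocycle [Fintype (RCoset Γ₂)] (σ : RCoset Γ₂ → Γ₁)
    (hσ : ∀ c, rcoset Γ₂ (σ c) = c) (φ : ↥Γ₂ → V) (g : Γ₁) : Γ₁ → V :=
  fun x => ∑ c : RCoset Γ₂, suppFun Γ₂ V (φ (cosetCocycle Γ₂ σ hσ g c)) (x * (σ c)⁻¹)

lemma mem_of_rcoset_eq {a b : Γ₁} (h : rcoset Γ₂ a = rcoset Γ₂ b) : b * a⁻¹ ∈ Γ₂ :=
  QuotientGroup.rightRel_apply.mp (Quotient.exact h)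

lemma cosetMul_rcoset (x g : Γ₁) : cosetMul Γ₂ (rcoset Γ₂ x) g = rcoset Γ₂ (x * g) := rfl

lemma cosetMul_mul (c : RCoset Γ₂) (g h : Γ₁) :
    cosetMul Γ₂ (cosetMul Γ₂ c g) h = cosetMul Γ₂ c (g * h) := by
  induction c using Quotient.ind with
  | _ x => show rcoset Γ₂ (x * g * h) = rcoset Γ₂ (x * (g * h)); rw [mul_assoc]

lemma cosetCocycle_mul (σ : RCoset Γ₂ → Γ₁) (hσ : ∀ c, rcoset Γ₂ (σ c) = c)
    (g h : Γ₁) (c : RCoset Γ₂) :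
    cosetCocycle Γ₂ σ hσ (g * h) c =
      cosetCocycle Γ₂ σ hσ g c * cosetCocycle Γ₂ σ hσ h (cosetMul Γ₂ c g) := by
  ext
  simp only [cosetCocycle, Subgroup.coe_mul, cosetMul_mul]
  group

lemma shapiro_eval [Fintype (RCoset Γ₂)] (σ : RCoset Γ₂ → Γ₁)
    (hσ : ∀ c, rcoset Γ₂ (σ c) = c) (φ : ↥Γ₂ → V) (g x : Γ₁) :
    shapiroCocycle Γ₂ V σ hσ φ g x =
      (⟨x * (σ (rcoset Γ₂ x))⁻¹, mem_of_rcoset_eq Γ₂ (hσ (rcoset Γ₂ x))⟩ : ↥Γ₂) •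
        φ (cosetCocycle Γ₂ σ hσ g (rcoset Γ₂ x)) := by
  unfold shapiroCocycle
  rw [Finset.sum_eq_single (rcoset Γ₂ x)]
  · rw [suppFun, dif_pos (mem_of_rcoset_eq Γ₂ (hσ (rcoset Γ₂ x)))]
  · intro c _ hc
    rw [suppFun, dif_neg]
    intro hmem'
    apply hc
    have h1 : rcoset Γ₂ (σ c) = rcoset Γ₂ x :=
      Quotient.sound (QuotientGroup.rightRel_apply.mpr hmem')
    rw [hσ] at h1
    exact h1
  · exact fun h => absurd (Finset.mem_univ _) h

theorem statement1 [Fintype (RCoset Γ₂)]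
    (σ : RCoset Γ₂ → Γ₁) (hσ : ∀ c, rcoset Γ₂ (σ c) = c)
    (hσ1 : σ (rcoset Γ₂ 1) = 1)
    (φ : ↥Γ₂ → V) (hφ : ∀ k k' : ↥Γ₂, φ (k * k') = φ k + k • φ k') :
    -- Φ_φ takes values in Ind_{Γ₂}^{Γ₁} V ...
    (∀ g : Γ₁, shapiroCocycle Γ₂ V σ hσ φ g ∈ IndSub Γ₂ V)
    -- ... and is a 1-cocycle for the right translation action of Γ₁:
    ∧ (∀ g h x : Γ₁,
        shapiroCocycle Γ₂ V σ hσ φ (g * h) x =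
          shapiroCocycle Γ₂ V σ hσ φ g x + shapiroCocycle Γ₂ V σ hσ φ h (x * g))
    -- and restricting along Γ₂ and evaluating at 1 recovers φ:
    ∧ (∀ k : ↥Γ₂, shapiroCocycle Γ₂ V σ hσ φ (k : Γ₁) 1 = φ k) := by
  refine ⟨?_, ?_, ?_⟩
  · -- membership
    intro g k y
    have hc : rcoset Γ₂ ((k : Γ₁) * y) = rcoset Γ₂ y := by
      apply Quotient.sound
      refine QuotientGroup.rightRel_apply.mpr ?_
      simpa using k.2
    rw [shapiro_eval, shapiro_eval]
    simp only [hc, ← mul_smul]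
    congr 1
    ext
    simp [mul_assoc]
  · -- cocycle identity
    intro g h x
    rw [shapiro_eval, shapiro_eval, shapiro_eval, cosetCocycle_mul, hφ, smul_add,
      ← mul_smul]
    simp only [cosetMul_rcoset]
    congr 2
    ext
    simp only [cosetCocycle, Subgroup.coe_mul, cosetMul_rcoset]
    group
  · -- restriction to Γ₂
    intro k
    rw [shapiro_eval]
    have h1 : rcoset Γ₂ (1 : Γ₁) = rcoset Γ₂ (k : Γ₁) := by
      apply Quotient.sound
      refine QuotientGroup.rightRel_apply.mpr ?_
      simpa using k.2
    have e1 : (⟨(1 : Γ₁) * (σ (rcoset Γ₂ 1))⁻¹,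
        mem_of_rcoset_eq Γ₂ (hσ (rcoset Γ₂ 1))⟩ : ↥Γ₂) = 1 := by
      ext; simp [hσ1]
    have e2 : cosetCocycle Γ₂ σ hσ (k : Γ₁) (rcoset Γ₂ 1) = k := by
      ext
      simp only [cosetCocycle, cosetMul_rcoset, hσ1, one_mul, one_mul, ← h1, hσ1]
      simp
    rw [e1, e2, one_smul]

end Statement1
end

section
/- Let V be an abelian group with trivial Γ₂-action. For α ∈ Hom(I_Δ, V) let f_α : Δ → V be f_α(c) = α(c − 1) (an element of Ind_{Γ₂}^{Γ₁} V via the identification with functions Δ → V), and let b_α ∈ B¹(Γ₁, Ind_{Γ₂}^{Γ₁} V) be the coboundary b_α(g) = g·f_α − f_α. Then the map sending (φ, α) ∈ Hom(Γ₂^{ab}, V) ⊕ Hom(I_Δ, V) = Hom(𝓔, V) to Φ_φ + b_α is an isomorphism of abelian groups Hom(𝓔, V) → Z¹(Γ₁, Ind_{Γ₂}^{Γ₁} V), and it is Δ-equivariant, where Δ acts on Hom(𝓔, V) by (d∗ψ)(x) = ψ(d^{-1}∗x) and on Z¹(Γ₁, Ind_{Γ₂}^{Γ₁} V) by ((d∗Φ)(g))(c)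 = Φ(g)(d^{-1}c). -/
/-!
Write `k(g, c) = σ(c) g σ(c·π g)⁻¹ ∈ Γ₂`. Then `Ψ(ψ)(g)(c) = ψ(e(g, c))` for the element
`e(g, c) = ([k(g, c)], (c·π g − 1) − (c − 1))` of `𝓔`, and `e` is itself a cocycle because `k` is.
Conversely, the cocycle identity applied to `σ(c)·g = k(g, c)·σ(c·π g)` gives
`Φ(g)(c) = Φ(k(g, c))(1) + Φ(σ(c·π g))(1) − Φ(σ(c))(1)`, so `Φ` is `Ψ` of the homomorphism
`([k], c − 1) ↦ Φ(k)(1) + Φ(σ(c))(1)`; injectivity holds because `e(k, 1) = ([k], 0)` for `k ∈ Γ₂`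
and `e(σ(c), 1) = (0, c − 1)`. The action formula on `𝓔` is exactly what makes
`d ∗ e(g, c) = e(g, d·c)`, which is the equivariance.
-/

open scoped TensorProduct

section EModule

variable {Γ₁ Δ : Type} [Group Γ₁] [Group Δ]

/-- The augmentation map `ℤ[Δ] → ℤ` (sum of coefficients), with `ℤ[Δ]`
realized as `Δ →₀ ℤ`. -/
noncomputable def augmentation (Δ : Type) : (Δ →₀ ℤ) →+ ℤ :=
  Finsupp.liftAddHom fun _ => AddMonoidHom.id ℤ

/-- The augmentation ideal `I_Δ ⊆ ℤ[Δ]`, as an additive subgroup. -/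
noncomputable def augIdeal (Δ : Type) : AddSubgroup (Δ →₀ ℤ) := (augmentation Δ).ker

/-- The element `c − 1` of `I_Δ`. -/
noncomputable def aidElt [Group Δ] (c : Δ) : ↥(augIdeal Δ) :=
  ⟨Finsupp.single c 1 - Finsupp.single 1 1, by
    simp [augIdeal, AddMonoidHom.mem_ker, map_sub, augmentation,
      Finsupp.liftAddHom_apply_single]⟩

/-- The element `a − b` of `I_Δ`. -/
noncomputable def aidElt2 [Group Δ] (a b : Δ) : ↥(augIdeal Δ) :=
  ⟨Finsupp.single a 1 - Finsupp.single b 1, by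
    simp [augIdeal, AddMonoidHom.mem_ker, map_sub, augmentation,
      Finsupp.liftAddHom_apply_single]⟩

/-- The underlying abelian group `Γ₂^{ab} ⊕ I_Δ` of the ℤ[Δ]-module 𝓔
(with `Γ₂ = ker π` and `Γ₂^{ab}` its abelianization, written additively). -/
abbrev EMod (π : Γ₁ →* Δ) : Type :=
  Additive (Abelianization ↥π.ker) × ↥(augIdeal Δ)

/-- The Δ-action `d·[k] = [σ(d) k σ(d)⁻¹]` on `Γ₂^{ab}` (conjugation uses
normality of `Γ₂ = ker π`). -/
noncomputable def conjAb (π : Γ₁ →* Δ) (σ : Δ → Γ₁) (d : Δ) :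
    Abelianization ↥π.ker →* Abelianization ↥π.ker :=
  Abelianization.map (MulAut.conjNormal (σ d)).toMonoidHom

/-- The 2-cocycle `κ(d,c) = [σ(d)σ(c)σ(dc)⁻¹] ∈ Γ₂^{ab}`. -/
noncomputable def kappaE (π : Γ₁ →* Δ) (σ : Δ → Γ₁) (hσ : ∀ c, π (σ c) = c)
    (d c : Δ) : Abelianization ↥π.ker :=
  Abelianization.of ⟨σ d * σ c * (σ (d * c))⁻¹, by
    have : π (σ d * σ c * (σ (d * c))⁻¹) = 1 := by
      simp only [map_mul, map_inv, hσ, mul_inv_cancel]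
    simpa [MonoidHom.mem_ker] using this⟩

/-- The defining formula of the Δ-action on `𝓔 = Γ₂^{ab} ⊕ I_Δ`:
`d ∗ (g, c−1) = (d·g + κ(d,c), dc − d)`, extended ℤ-linearly.  (The elements
`(g, c−1)` generate `𝓔`, so this determines the action.) -/
def EActionFormula (π : Γ₁ →* Δ) (σ : Δ → Γ₁) (hσ : ∀ c, π (σ c) = c)
    [DistribMulAction Δ (EMod π)] : Prop :=
  ∀ (d : Δ) (g : Abelianization ↥π.ker) (c : Δ),
    d • ((Additive.ofMul g, aidElt c) : EMod π) =
      (Additive.ofMul (conjAb π σ d g * kappaE π σ hσ d c), aidElt2 (d * c) d)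

variable (M : Type) [AddCommGroup M] [DistribMulAction Δ M]

/-- `T = 𝓔 ⊗ M`. -/
abbrev TMod (π : Γ₁ →* Δ) : Type := (EMod π) ⊗[ℤ] M

/-- The diagonal action of `d ∈ Δ` on `𝓔 ⊗ M`. -/
noncomputable def diagT (π : Γ₁ →* Δ) [DistribMulAction Δ (EMod π)] (d : Δ) :
    TMod M π →ₗ[ℤ] TMod M π :=
  TensorProduct.map ((DistribMulAction.toAddMonoidHom (EMod π) d).toIntLinearMap)
    ((DistribMulAction.toAddMonoidHom M d).toIntLinearMap)

/-- The subgroup of `𝓔 ⊗ M` generated by the elements `d•t − t`. -/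
noncomputable def coinvKerT (π : Γ₁ →* Δ) [DistribMulAction Δ (EMod π)] :
    AddSubgroup (TMod M π) :=
  AddSubgroup.closure {x | ∃ (d : Δ) (t : TMod M π), x = diagT M π d t - t}

/-- The Δ-coinvariants `(𝓔 ⊗ M)_Δ`. -/
abbrev CoinvT (π : Γ₁ →* Δ) [DistribMulAction Δ (EMod π)] : Type :=
  TMod M π ⧸ coinvKerT M π

/-- 1-cocycles `Z¹(Γ₁, Hom(M,V))`, where `Γ₁` acts on `Hom(M,V)` by
`(γ·f)(m) = f(π(γ)⁻¹·m)`. -/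
noncomputable def ZOneM (π : Γ₁ →* Δ) (V : Type) [AddCommGroup V] :
    AddSubgroup (Γ₁ → (M →+ V)) where
  carrier := {Φ | ∀ (g h : Γ₁) (m : M), Φ (g * h) m = Φ g m + Φ h ((π g)⁻¹ • m)}
  zero_mem' := by intro g h m; simp
  add_mem' := by
    intro Φ Ψ hΦ hΨ g h m
    simp only [Pi.add_apply, AddMonoidHom.add_apply, hΦ g h m, hΨ g h m]
    abel
  neg_mem' := by
    intro Φ hΦ g h m
    simp only [Pi.neg_apply, AddMonoidHom.neg_apply, hΦ g h m]
    abel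

/-- The subgroup `I_Δ·M ⊆ M` generated by the elements `c•m − m`. -/
noncomputable def idealSMulM : AddSubgroup M :=
  AddSubgroup.closure {x : M | ∃ (c : Δ) (m : M), x = c • m - m}

/-- First differential `(Γ₁ →₀ M) → M`, `[g]⊗m ↦ π(g)•m − m`, of the complex
computing `H_1(Γ₁, M)` (with `Γ₁` acting on `M` through `π`). -/
noncomputable def dOne (π : Γ₁ →* Δ) : (Γ₁ →₀ M) →+ M :=
  Finsupp.liftAddHom fun g =>
    DistribMulAction.toAddMonoidHom M (π g) - AddMonoidHom.id M

/-- Second differential `(Γ₁×Γ₁ →₀ M) → (Γ₁ →₀ M)`,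
`[g|h]⊗m ↦ [h]⊗m − [gh]⊗m + [g]⊗(π(h)•m)`. -/
noncomputable def dTwo (π : Γ₁ →* Δ) : ((Γ₁ × Γ₁) →₀ M) →+ (Γ₁ →₀ M) :=
  Finsupp.liftAddHom fun p =>
    (Finsupp.singleAddHom p.2 - Finsupp.singleAddHom (p.1 * p.2)
      + (Finsupp.singleAddHom p.1).comp (DistribMulAction.toAddMonoidHom M (π p.2)) :
        M →+ (Γ₁ →₀ M))

/-- The group homology `H_1(Γ₁, M)` (action of `Γ₁` on `M` through `π`). -/
abbrev HOne (π : Γ₁ →* Δ) : Type :=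
  ↥(dOne M π).ker ⧸ ((dTwo M π).range.addSubgroupOf (dOne M π).ker)

end EModule


section Statement3

variable {Γ₁ Δ : Type} [Group Γ₁] [Group Δ]

/-- The element `σ(c) g σ(c·π g)⁻¹ ∈ Γ₂ = ker π`. -/
def kerElt (π : Γ₁ →* Δ) (σ : Δ → Γ₁) (hσ : ∀ c, π (σ c) = c)
    (g : Γ₁) (c : Δ) : ↥π.ker :=
  ⟨σ c * g * (σ (c * π g))⁻¹, by
    have : π (σ c * g * (σ (c * π g))⁻¹) = 1 := by
      simp only [map_mul, map_inv, hσ, mul_inv_cancel]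
    simpa [MonoidHom.mem_ker] using this⟩

/-- 1-cocycles of `Γ₁` with values in `Ind_{Γ₂}^{Γ₁} V ≅ (Δ → V)` (trivial
action on `V`), for the action `(g·f)(c) = f(c·π g)`. -/
noncomputable def ZOneDfun (π : Γ₁ →* Δ) (V : Type) [AddCommGroup V] :
    AddSubgroup (Γ₁ → (Δ → V)) where
  carrier := {Φ | ∀ (g h : Γ₁) (c : Δ), Φ (g * h) c = Φ g c + Φ h (c * π g)}
  zero_mem' := by intro g h c; simp
  add_mem' := by
    intro Φ Ψ hΦ hΨ g h c
    simp only [Pi.add_apply, hΦ g h c, hΨ g h c]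
    abel
  neg_mem' := by
    intro Φ hΦ g h c
    simp only [Pi.neg_apply, hΦ g h c]
    abel

/-- The map `ψ ↦ Φ_φ + b_α` for `ψ = (φ, α) ∈ Hom(𝓔, V)`:
`g ↦ (c ↦ φ(σ(c) g σ(c·π g)⁻¹) + α((c·π g) − 1) − α(c − 1))`. -/
noncomputable def PsiMap (π : Γ₁ →* Δ) (σ : Δ → Γ₁) (hσ : ∀ c, π (σ c) = c)
    (V : Type) [AddCommGroup V] (ψ : EMod π →+ V) : Γ₁ → Δ → V :=
  fun g c =>
    ψ (Additive.ofMul (Abelianization.of (kerElt π σ hσ g c)), 0)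
      + ψ (0, aidElt (c * π g)) - ψ (0, aidElt c)


lemma aidElt_one : aidElt (1 : Δ) = 0 :=
  Subtype.ext (sub_self _)

lemma aidElt2_sub_aidElt2 (a b e : Δ) : aidElt2 a e - aidElt2 b e = aidElt a - aidElt b := by
  apply Subtype.ext
  simp [aidElt, aidElt2]

noncomputable def augIdealRetraction (Δ : Type) [Group Δ] : (Δ →₀ ℤ) →+ augIdeal Δ where
  toFun x := ⟨x - Finsupp.single 1 (augmentation Δ x), by
    rw [augIdeal, AddMonoidHom.mem_ker, map_sub, augmentation, Finsupp.liftAddHom_apply_single]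
    exact sub_self _⟩
  map_zero' := by ext; simp
  map_add' x y := by
    ext : 1
    simp only [map_add, Finsupp.single_add, AddSubgroup.coe_add]
    abel

lemma augIdealRetraction_single (c : Δ) (n : ℤ) :
    augIdealRetraction Δ (Finsupp.single c n) = n • aidElt c := by
  ext : 1
  simp [augIdealRetraction, aidElt, augmentation, smul_sub]

lemma augIdealRetraction_coe (x : augIdeal Δ) : augIdealRetraction Δ x = x := by
  ext : 1
  simp [augIdealRetraction, show augmentation Δ x = 0 from x.2]

lemma augIdeal_hom_ext {V : Type} [AddCommGroup V] {f g : augIdeal Δ →+ V}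
    (h : ∀ c : Δ, f (aidElt c) = g (aidElt c)) : f = g := by
  have hr : f.comp (augIdealRetraction Δ) = g.comp (augIdealRetraction Δ) :=
    Finsupp.addHom_ext fun c n => by simp [augIdealRetraction_single, h c]
  ext x
  simpa [augIdealRetraction_coe] using DFunLike.congr_fun hr (x : Δ →₀ ℤ)

noncomputable def augIdealLift {V : Type} [AddCommGroup V] (v : Δ → V) : augIdeal Δ →+ V :=
  (Finsupp.liftAddHom fun c => zmultiplesHom V (v c)).comp (augIdeal Δ).subtype

lemma augIdealLift_aidElt {V : Type} [AddCommGroup V] (v : Δ → V) (c : Δ) :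
    augIdealLift v (aidElt c) = v c - v 1 := by
  simp only [augIdealLift, AddMonoidHom.comp_apply, AddSubgroup.coe_subtype, aidElt, map_sub,
    Finsupp.liftAddHom_apply_single, zmultiplesHom_apply, one_smul]

lemma EMod.hom_ext {π : Γ₁ →* Δ} {V : Type} [AddCommGroup V] {f g : EMod π →+ V}
    (hker : ∀ k : π.ker,
      f (Additive.ofMul (Abelianization.of k), 0) = g (Additive.ofMul (Abelianization.of k), 0))
    (haug : ∀ c : Δ, f (0, aidElt c) = g (0, aidElt c)) : f = g := by
  have hfst : ∀ a, f (a, 0) = g (a, 0) := by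
    intro a
    obtain ⟨k, rfl⟩ := QuotientGroup.mk_surjective (Additive.toMul a)
    exact hker k
  have hsnd : f.comp (AddMonoidHom.inr _ _) = g.comp (AddMonoidHom.inr _ _) :=
    augIdeal_hom_ext haug
  ext ⟨a, b⟩
  have hab : ((a, b) : EMod π) = (a, 0) + (0, b) := by simp
  rw [hab, map_add, map_add, hfst]
  exact congrArg (g (a, 0) + ·) (DFunLike.congr_fun hsnd b)

section Shapiro

variable (π : Γ₁ →* Δ) (σ : Δ → Γ₁) (hσ : ∀ c, π (σ c) = c)

noncomputable def shapiroElt (g : Γ₁) (c : Δ) : EMod π :=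
  (Additive.ofMul (Abelianization.of (kerElt π σ hσ g c)), aidElt (c * π g) - aidElt c)

lemma psiMap_eq_apply_shapiroElt (V : Type) [AddCommGroup V] (ψ : EMod π →+ V) (g : Γ₁) (c : Δ) :
    PsiMap π σ hσ V ψ g c = ψ (shapiroElt π σ hσ g c) := by
  rw [PsiMap, ← map_add, ← map_sub]
  congr 1
  ext <;> simp [shapiroElt]

lemma kerElt_mul (g h : Γ₁) (c : Δ) :
    kerElt π σ hσ (g * h) c = kerElt π σ hσ g c * kerElt π σ hσ h (c * π g) := by
  ext
  simp only [kerElt, Subgroup.coe_mul, map_mul, mul_assoc]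
  group

lemma shapiroElt_mul (g h : Γ₁) (c : Δ) :
    shapiroElt π σ hσ (g * h) c = shapiroElt π σ hσ g c + shapiroElt π σ hσ h (c * π g) := by
  ext
  · simp [shapiroElt, kerElt_mul]
  · simp only [shapiroElt, map_mul, mul_assoc, Prod.snd_add]
    abel

variable {π σ hσ}

lemma shapiroElt_of_mem_ker (hσ1 : σ 1 = 1) (k : π.ker) :
    shapiroElt π σ hσ k 1 = (Additive.ofMul (Abelianization.of k), 0) := by
  have hk : kerElt π σ hσ k 1 = k := by
    ext
    simp [kerElt, MonoidHom.mem_ker.mp k.2, hσ1]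
  simp [shapiroElt, hk, MonoidHom.mem_ker.mp k.2]

lemma shapiroElt_sigma_one (hσ1 : σ 1 = 1) (c : Δ) : shapiroElt π σ hσ (σ c) 1 = (0, aidElt c) := by
  have hk : kerElt π σ hσ (σ c) 1 = 1 := by
    ext
    simp [kerElt, hσ, hσ1]
  simp [shapiroElt, hk, hσ, aidElt_one]

lemma psiMap_injective (hσ1 : σ 1 = 1) (V : Type) [AddCommGroup V] :
    Function.Injective (PsiMap π σ hσ V) := by
  intro ψ ψ' h
  have hval : ∀ g, ψ (shapiroElt π σ hσ g 1) = ψ' (shapiroElt π σ hσ g 1) := fun g => by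
    simpa only [psiMap_eq_apply_shapiroElt] using congr_fun (congr_fun h g) 1
  refine EMod.hom_ext (fun k => ?_) (fun c => ?_)
  · simpa only [shapiroElt_of_mem_ker hσ1] using hval k
  · simpa only [shapiroElt_sigma_one hσ1] using hval (σ c)

variable {V : Type} [AddCommGroup V] {Φ : Γ₁ → Δ → V}

lemma ZOneDfun.apply_eq_of_mem (hΦ : Φ ∈ ZOneDfun π V) (g : Γ₁) (c : Δ) :
    Φ g c = Φ (kerElt π σ hσ g c) 1 + Φ (σ (c * π g)) 1 - Φ (σ c) 1 := by
  have hk : (kerElt π σ hσ g c : Γ₁) * σ (c * π g) = σ c * g := by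
    simp [kerElt]
  have hdecomp := hΦ (kerElt π σ hσ g c) (σ (c * π g)) 1
  have hcocycle := hΦ (σ c) g 1
  rw [hk, MonoidHom.mem_ker.mp (kerElt π σ hσ g c).2, one_mul] at hdecomp
  rw [hσ, one_mul] at hcocycle
  rw [← hdecomp, hcocycle]
  abel

variable (π) in
noncomputable def ZOneDfun.kerHom (hΦ : Φ ∈ ZOneDfun π V) : Additive (Abelianization π.ker) →+ V :=
  MonoidHom.toAdditiveLeft <| Abelianization.lift <|
    MonoidHom.mk' (fun k => Multiplicative.ofAdd (Φ k 1)) fun k k' => by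
      simpa [MonoidHom.mem_ker.mp k.2] using congrArg Multiplicative.ofAdd (hΦ k k' 1)

variable (σ) in
noncomputable def ZOneDfun.toEModHom (hΦ : Φ ∈ ZOneDfun π V) : EMod π →+ V :=
  (ZOneDfun.kerHom π hΦ).coprod (augIdealLift fun c => Φ (σ c) 1)

lemma ZOneDfun.toEModHom_shapiroElt (hΦ : Φ ∈ ZOneDfun π V) (g : Γ₁) (c : Δ) :
    ZOneDfun.toEModHom σ hΦ (shapiroElt π σ hσ g c) = Φ g c := by
  rw [ZOneDfun.apply_eq_of_mem (hσ := hσ) hΦ g c]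
  simp [ZOneDfun.toEModHom, ZOneDfun.kerHom, shapiroElt, augIdealLift_aidElt, add_sub_assoc]

lemma psiMap_toEModHom (hΦ : Φ ∈ ZOneDfun π V) :
    PsiMap π σ hσ V (ZOneDfun.toEModHom σ hΦ) = Φ := by
  funext g c
  rw [psiMap_eq_apply_shapiroElt, ZOneDfun.toEModHom_shapiroElt]

variable (π σ hσ) in
lemma conjAb_of_kerElt_mul_kappaE (d c : Δ) (g : Γ₁) :
    conjAb π σ d (Abelianization.of (kerElt π σ hσ g c)) * kappaE π σ hσ d (c * π g)
      = kappaE π σ hσ d c * Abelianization.of (kerElt π σ hσ g (d * c)) := by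
  rw [conjAb, Abelianization.map_of, kappaE, kappaE, ← map_mul, ← map_mul]
  congr 1
  ext
  simp [kerElt, MulAut.conjNormal_apply, mul_assoc]

lemma smul_shapiroElt [DistribMulAction Δ (EMod π)] (hE : EActionFormula π σ hσ)
    (d : Δ) (g : Γ₁) (c : Δ) :
    d • shapiroElt π σ hσ g c = shapiroElt π σ hσ g (d * c) := by
  have hsplit : shapiroElt π σ hσ g c =
      (Additive.ofMul (Abelianization.of (kerElt π σ hσ g c)), aidElt (c * π g))
        - (Additive.ofMul 1, aidElt c) := by
    ext <;> simp [shapiroElt]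
  rw [hsplit, smul_sub, hE, hE, map_one, one_mul]
  ext
  · rw [Prod.fst_sub, ← ofMul_div, conjAb_of_kerElt_mul_kappaE, mul_div_cancel_left]
    rfl
  · simp [aidElt2_sub_aidElt2, shapiroElt, mul_assoc]

end Shapiro

theorem statement3_general (V : Type) [AddCommGroup V]
    (π : Γ₁ →* Δ)
    (σ : Δ → Γ₁) (hσ : ∀ c, π (σ c) = c) (hσ1 : σ 1 = 1)
    [DistribMulAction Δ (EMod π)] (hE : EActionFormula π σ hσ) :
    -- the map lands in Z¹(Γ₁, Ind V) ...
    (∀ ψ : EMod π →+ V, PsiMap π σ hσ V ψ ∈ ZOneDfun π V)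
    -- ... is a homomorphism of abelian groups ...
    ∧ (∀ (ψ ψ' : EMod π →+ V) (g : Γ₁) (c : Δ),
        PsiMap π σ hσ V (ψ + ψ') g c = PsiMap π σ hσ V ψ g c + PsiMap π σ hσ V ψ' g c)
    -- ... is bijective onto Z¹(Γ₁, Ind V) ...
    ∧ Function.Injective (PsiMap π σ hσ V)
    ∧ (∀ Φ : Γ₁ → Δ → V, Φ ∈ ZOneDfun π V → ∃ ψ : EMod π →+ V, PsiMap π σ hσ V ψ = Φ)
    -- ... and is Δ-equivariant: Ψ(d∗ψ) = d∗Ψ(ψ):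
    ∧ (∀ (d : Δ) (ψ : EMod π →+ V) (g : Γ₁) (c : Δ),
        PsiMap π σ hσ V (ψ.comp (DistribMulAction.toAddMonoidHom (EMod π) d⁻¹)) g c =
          PsiMap π σ hσ V ψ g (d⁻¹ * c)) := by
  refine ⟨fun ψ g h c => ?_, fun ψ ψ' g c => ?_, psiMap_injective hσ1 V,
    fun Φ hΦ => ⟨ZOneDfun.toEModHom σ hΦ, psiMap_toEModHom hΦ⟩, fun d ψ g c => ?_⟩
  · simp only [psiMap_eq_apply_shapiroElt, shapiroElt_mul, map_add]
  · simp only [psiMap_eq_apply_shapiroElt, AddMonoidHom.add_apply]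
  · simp only [psiMap_eq_apply_shapiroElt, AddMonoidHom.comp_apply,
      DistribMulAction.toAddMonoidHom_apply, smul_shapiroElt hE]

theorem statement3 (V : Type) [AddCommGroup V]
    (π : Γ₁ →* Δ) (hπ : Function.Surjective π)
    (σ : Δ → Γ₁) (hσ : ∀ c, π (σ c) = c) (hσ1 : σ 1 = 1)
    [Fintype Δ]
    [DistribMulAction Δ (EMod π)] (hE : EActionFormula π σ hσ) :
    -- the map lands in Z¹(Γ₁, Ind V) ...
    (∀ ψ : EMod π →+ V, PsiMap π σ hσ V ψ ∈ ZOneDfun π V)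
    -- ... is a homomorphism of abelian groups ...
    ∧ (∀ (ψ ψ' : EMod π →+ V) (g : Γ₁) (c : Δ),
        PsiMap π σ hσ V (ψ + ψ') g c = PsiMap π σ hσ V ψ g c + PsiMap π σ hσ V ψ' g c)
    -- ... is bijective onto Z¹(Γ₁, Ind V) ...
    ∧ Function.Injective (PsiMap π σ hσ V)
    ∧ (∀ Φ : Γ₁ → Δ → V, Φ ∈ ZOneDfun π V → ∃ ψ : EMod π →+ V, PsiMap π σ hσ V ψ = Φ)
    -- ... and is Δ-equivariant: Ψ(d∗ψ) = d∗Ψ(ψ):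
    ∧ (∀ (d : Δ) (ψ : EMod π →+ V) (g : Γ₁) (c : Δ),
        PsiMap π σ hσ V (ψ.comp (DistribMulAction.toAddMonoidHom (EMod π) d⁻¹)) g c =
          PsiMap π σ hσ V ψ g (d⁻¹ * c)) :=
  statement3_general V π σ hσ hσ1 hE

end Statement3
end

section
/- Let Γ₁ be a group, Γ₂ ⊴ Γ₁ normal of finite index, Δ = Γ₁/Γ₂ with projection π, M an abelian group with Δ-action, and V an abelian group. Identify Ind_{Γ₂}^{Γ₁} Hom(M, V) with Hom(ℤ[Δ] ⊗ M, V), where Γ₁ acts on ℤ[Δ] ⊗ M by g·(c ⊗ m) = c·π(g)^{-1} ⊗ m; the diagonal Δ-action d·(c ⊗ m) = dc ⊗ d·m commutes with this Γ₁-action and induces a Δ-action on Ind_{Γ₂}^{Γ₁} Hom(M, V) commuting with Γ₁. Then the Δ-invariants (Ind_{Γ₂}^{Γ₁} Hom(M, V))^Δ are naturally isomorphic, as a Γ₁-module, to Hom(M, V) with Γ₁ acting via (γ·f)(m) = f(π(γ)^{-1}·m). -/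
/-!
STATEMENT 4.  With Γ₂ = ker π ⊴ Γ₁ of finite index, Δ = Γ₁/Γ₂, M an abelian
group with Δ-action and V an abelian group, identify Ind_{Γ₂}^{Γ₁} Hom(M,V)
with Hom(ℤ[Δ] ⊗ M, V), where Γ₁ acts on ℤ[Δ] ⊗ M by g·(c⊗m) = c·π(g)⁻¹ ⊗ m
and Δ acts diagonally by d·(c⊗m) = dc ⊗ d·m (inducing on Hom the actions
(g·F)(w) = F(g⁻¹·w), (d·F)(w) = F(d⁻¹·w)).  Then evaluation at 1⊗(−) is an
isomorphism from the Δ-invariants onto Hom(M,V), equivariant for the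
Γ₁-action (γ·f)(m) = f(π(γ)⁻¹·m) on Hom(M,V).
-/

open scoped TensorProduct

section Statement4

variable {Γ₁ Δ : Type} [Group Γ₁] [Group Δ]
variable (M V : Type) [AddCommGroup M] [DistribMulAction Δ M] [AddCommGroup V]

/-- `W = ℤ[Δ] ⊗ M` (with `ℤ[Δ]` realized as `Δ →₀ ℤ`). -/
abbrev WMod := (Δ →₀ ℤ) ⊗[ℤ] M

/-- The action of `g ∈ Γ₁` on `W = ℤ[Δ] ⊗ M`: `c ⊗ m ↦ c·π(g)⁻¹ ⊗ m`. -/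
noncomputable def rhoW (π : Γ₁ →* Δ) (g : Γ₁) : WMod (Δ := Δ) M →ₗ[ℤ] WMod (Δ := Δ) M :=
  TensorProduct.map
    (Finsupp.mapDomain.addMonoidHom (fun c : Δ => c * (π g)⁻¹)).toIntLinearMap
    LinearMap.id

/-- The diagonal action of `d ∈ Δ` on `W = ℤ[Δ] ⊗ M`: `c ⊗ m ↦ dc ⊗ d·m`. -/
noncomputable def tauW (d : Δ) : WMod (Δ := Δ) M →ₗ[ℤ] WMod (Δ := Δ) M :=
  TensorProduct.map
    (Finsupp.mapDomain.addMonoidHom (fun c : Δ => d * c)).toIntLinearMap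
    (DistribMulAction.toAddMonoidHom M d).toIntLinearMap

/-- The Δ-invariants of `Hom(ℤ[Δ] ⊗ M, V) ( = Ind_{Γ₂}^{Γ₁} Hom(M,V))`. -/
noncomputable def invHom : AddSubgroup (WMod (Δ := Δ) M →+ V) where
  carrier := {F | ∀ (d : Δ) (w : WMod (Δ := Δ) M), F (tauW M d w) = F w}
  zero_mem' := by intro d w; simp
  add_mem' := by intro F F' hF hF' d w; simp [hF d w, hF' d w]
  neg_mem' := by intro F hF d w; simp [hF d w]

/-- Evaluation `F ↦ (m ↦ F(1 ⊗ m))`, realizing the natural isomorphism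
`(Ind_{Γ₂}^{Γ₁} Hom(M,V))^Δ ≅ Hom(M,V)`. -/
noncomputable def evInv (F : ↥(invHom (Δ := Δ) M V)) : M →+ V :=
  (F : WMod (Δ := Δ) M →+ V).comp
    (((TensorProduct.mk ℤ (Δ →₀ ℤ) M) (Finsupp.single (1 : Δ) 1)).toAddMonoidHom)

/- A Δ-invariant `F` is determined by its restriction to `1 ⊗ M`, because
`single d 1 ⊗ m = tauW d (single 1 1 ⊗ d⁻¹ • m)`; so `F (single d n ⊗ m) = n • f (d⁻¹ • m)` with
`f = evInv F`, and conversely this formula defines a Δ-invariant map for every `f`.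
Equivariance follows from `rhoW π g⁻¹ (single 1 1 ⊗ m) = single (π g) 1 ⊗ m`. -/

omit [Group Δ] [DistribMulAction Δ M] in
theorem WMod.hom_ext {F F' : WMod (Δ := Δ) M →+ V}
    (h : ∀ (d : Δ) (m : M), F (Finsupp.single d 1 ⊗ₜ m) = F' (Finsupp.single d 1 ⊗ₜ m)) :
    F = F' :=
  AddMonoidHom.toIntLinearMap_injective <| TensorProduct.ext <|
    Finsupp.lhom_ext' fun d => LinearMap.ext_ring <| LinearMap.ext fun m => h d m

theorem tauW_single_tmul (d e : Δ) (n : ℤ) (m : M) :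
    tauW M d (Finsupp.single e n ⊗ₜ m) = Finsupp.single (d * e) n ⊗ₜ (d • m) :=
  (TensorProduct.map_tmul _ _ _ _).trans (by simp [Finsupp.mapDomain_single])

omit [DistribMulAction Δ M] in
theorem rhoW_single_tmul (π : Γ₁ →* Δ) (g : Γ₁) (e : Δ) (n : ℤ) (m : M) :
    rhoW M π g (Finsupp.single e n ⊗ₜ m) = Finsupp.single (e * (π g)⁻¹) n ⊗ₜ m :=
  (TensorProduct.map_tmul _ _ _ _).trans (by simp [Finsupp.mapDomain_single])

theorem apply_single_tmul_eq_evInv (F : invHom (Δ := Δ) M V) (d : Δ) (m : M) :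
    (F : WMod M →+ V) (Finsupp.single d 1 ⊗ₜ m) = evInv M V F (d⁻¹ • m) := by
  have h := F.2 d (Finsupp.single 1 1 ⊗ₜ (d⁻¹ • m))
  rwa [tauW_single_tmul, mul_one, smul_inv_smul] at h

theorem evInv_injective : Function.Injective (evInv (Δ := Δ) M V) := fun F F' h =>
  Subtype.ext <| WMod.hom_ext M V fun d m => by
    rw [apply_single_tmul_eq_evInv, apply_single_tmul_eq_evInv, h]

noncomputable def liftHom (f : M →+ V) : WMod (Δ := Δ) M →+ V :=
  (TensorProduct.lift <| Finsupp.lsum ℤ fun d : Δ =>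
    LinearMap.toSpanSingleton ℤ (M →ₗ[ℤ] V)
      (f.toIntLinearMap ∘ₗ (DistribSMul.toAddMonoidHom M d⁻¹).toIntLinearMap)).toAddMonoidHom

theorem liftHom_single_tmul (f : M →+ V) (d : Δ) (n : ℤ) (m : M) :
    liftHom M V f (Finsupp.single d n ⊗ₜ m) = n • f (d⁻¹ • m) := by
  simp [liftHom]

theorem liftHom_mem_invHom (f : M →+ V) : liftHom (Δ := Δ) M V f ∈ invHom M V := by
  intro d w
  change (liftHom M V f).comp (tauW M d).toAddMonoidHom w = liftHom M V f w
  congr 1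
  refine WMod.hom_ext M V fun e m => ?_
  simp only [AddMonoidHom.comp_apply, LinearMap.toAddMonoidHom_coe, tauW_single_tmul,
    liftHom_single_tmul, mul_inv_rev, mul_smul, inv_smul_smul]

theorem evInv_liftHom (f : M →+ V) :
    evInv M V ⟨liftHom (Δ := Δ) M V f, liftHom_mem_invHom M V f⟩ = f :=
  AddMonoidHom.ext fun m => (liftHom_single_tmul M V f 1 1 m).trans (by simp)

theorem evInv_bijective : Function.Bijective (evInv (Δ := Δ) M V) :=
  ⟨evInv_injective M V, fun f => ⟨_, evInv_liftHom M V f⟩⟩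

theorem evInv_add (F F' : invHom (Δ := Δ) M V) :
    evInv M V (F + F') = evInv M V F + evInv M V F' :=
  rfl

theorem evInv_of_apply_eq_apply_rhoW (π : Γ₁ →* Δ) (g : Γ₁) (F F' : invHom (Δ := Δ) M V)
    (h : ∀ w, (F' : WMod M →+ V) w = (F : WMod M →+ V) (rhoW M π g⁻¹ w)) (m : M) :
    evInv M V F' m = evInv M V F ((π g)⁻¹ • m) := by
  have hF' := h (Finsupp.single 1 1 ⊗ₜ m)
  rwa [rhoW_single_tmul, map_inv, inv_inv, one_mul, apply_single_tmul_eq_evInv M V F] at hF'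

theorem statement4 (π : Γ₁ →* Δ) :
    -- evaluation at `1 ⊗ (−)` is additive and bijective ...
    Function.Bijective (evInv (Δ := Δ) M V)
    ∧ (∀ F F' : ↥(invHom (Δ := Δ) M V), evInv M V (F + F') = evInv M V F + evInv M V F')
    -- ... and Γ₁-equivariant: if F' = g·F (i.e. F' = F ∘ (g⁻¹ acting on W))
    -- then evInv F' = g·(evInv F), where (γ·f)(m) = f(π(γ)⁻¹ • m):
    ∧ (∀ (F F' : ↥(invHom (Δ := Δ) M V)) (g : Γ₁),
        (∀ w, (F' : WMod (Δ := Δ) M →+ V) w =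
          (F : WMod (Δ := Δ) M →+ V) (rhoW M π g⁻¹ w)) →
        ∀ m : M, evInv M V F' m = evInv M V F ((π g)⁻¹ • m)) :=
  ⟨evInv_bijective M V, evInv_add M V,
    fun F F' g h => evInv_of_apply_eq_apply_rhoW M V π g F F' h⟩

end Statement4
end
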